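/- Let F be a finite field and consider the valuation ν(f/g) = deg g − deg f on Q = F(t) with valuation ring R. Then the stabilizer of the vertex [R^n] of the affine building (homothety class of the standard R-lattice in Q^n) under the action of GL_n(F[t]) equals GL_n(F); in particular it is finite, and the action of GL_n(F[t]) on the affine building is proper. -/

import Mathlib

set_option synthInstance.maxHeartbeats 1000000
set_option maxHeartbeats 1000000

/-- The valuation ring of the valuation `ν(p/q) = deg q - deg p` on `F(t)`,
i.e. rational functions of nonpositive `intDegree`. -/
noncomputable def valR (F : Type*) [Field F] : Subring (RatFunc F) where
  carrier := {x | x.intDegree ≤ 0}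
  zero_mem' := by simp [Set.mem_setOf_eq, RatFunc.intDegree_zero]
  one_mem' := by simp [Set.mem_setOf_eq, RatFunc.intDegree_one]
  add_mem' := by
    intro a b ha hb
    rcases eq_or_ne b 0 with rfl | hb0
    · simpa using ha
    rcases eq_or_ne (a + b) 0 with h | h
    · simp [Set.mem_setOf_eq, h, RatFunc.intDegree_zero]
    · simp only [Set.mem_setOf_eq] at ha hb ⊢
      exact le_trans (RatFunc.intDegree_add_le hb0 h) (sup_le ha hb)
  mul_mem' := by
    intro a b ha hb
    rcases eq_or_ne a 0 with rfl | ha0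
    · simp [Set.mem_setOf_eq, RatFunc.intDegree_zero]
    rcases eq_or_ne b 0 with rfl | hb0
    · simp [Set.mem_setOf_eq, RatFunc.intDegree_zero]
    · simp only [Set.mem_setOf_eq] at ha hb ⊢
      rw [RatFunc.intDegree_mul ha0 hb0]
      omega
  neg_mem' := by
    intro a ha
    simpa [Set.mem_setOf_eq, RatFunc.intDegree_neg] using ha

/-- `M ∈ GL_n(F[t])` stabilizes the homothety class of the `R`-lattice `L` in
`F(t)^n`: the image of `L` under `M` equals the image of `L` under multiplication by
some nonzero scalar `c ∈ F(t)`. -/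
noncomputable def stabilizesClass (F : Type*) [Field F] (n : ℕ)
    (L : Submodule (valR F) (Fin n → RatFunc F))
    (M : Matrix (Fin n) (Fin n) (Polynomial F)) : Prop :=
  ∃ c : RatFunc F, c ≠ 0 ∧
    L.map (LinearMap.restrictScalars (valR F)
      ((M.map (algebraMap (Polynomial F) (RatFunc F))).mulVecLin)) =
    L.map (LinearMap.restrictScalars (valR F)
      (c • (LinearMap.id : (Fin n → RatFunc F) →ₗ[RatFunc F] (Fin n → RatFunc F))))

/-!
If `M` stabilizes `[L]`, then `c⁻¹ M` and `c M⁻¹` both map `L` into itself for some scalar `c`.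
When `L` is squeezed between `s R^n` and `t^D R^n`, applying these to `s eᵢ` bounds the degrees of
their entries by `D - deg s`; as some entry of the polynomial matrix `M⁻¹` has degree `≥ 0`, the
scalar `c` cancels and every entry of `M` has degree at most `2 (D - deg s)`. Over a finite field
only finitely many matrices satisfy such a bound, and for `L = R^n` (`D = 0`, `s = 1`) it forces
`M` to be constant.
-/

open Set Submodule Matrix
open scoped Polynomial

theorem Polynomial.finite_setOf_natDegree_le (R : Type*) [Semiring R] [Finite R] (B : ℕ) :
    {p : R[X] | p.natDegree ≤ B}.Finite := by
  refine Set.Finite.of_finite_image (f := fun p (i : Fin (B + 1)) => p.coeff i)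
    (Set.toFinite _) fun p hp q hq hpq => Polynomial.ext fun k => ?_
  rcases le_or_gt k B with hk | hk
  · exact congrFun hpq ⟨k, Nat.lt_succ_of_le hk⟩
  · rw [Polynomial.coeff_eq_zero_of_natDegree_lt (hp.trans_lt hk),
      Polynomial.coeff_eq_zero_of_natDegree_lt (hq.trans_lt hk)]

theorem Matrix.finite_setOf_natDegree_le {R : Type*} [Semiring R] [Finite R] {m n : Type*}
    [Finite m] [Finite n] (B : ℕ) :
    {M : Matrix m n R[X] | ∀ i j, (M i j).natDegree ≤ B}.Finite :=
  (Set.Finite.pi fun _ => Set.Finite.pi fun _ =>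
    Polynomial.finite_setOf_natDegree_le R B).subset fun _ hM i _ j _ => hM i j

theorem Matrix.exists_ne_zero_of_mul_eq_one {R : Type*} [Semiring R] [Nontrivial R]
    {ι : Type*} [Fintype ι] [DecidableEq ι] {A B : Matrix ι ι R} (h : A * B = 1) (i : ι) :
    ∃ k, B k i ≠ 0 := by
  by_contra! hB
  simpa [mul_apply, hB] using congrFun (congrFun h i) i

theorem RatFunc.intDegree_mul_algebraMap {F : Type*} [Field F] {c : RatFunc F} (hc : c ≠ 0)
    {p : F[X]} (hp : p ≠ 0) :
    (c * algebraMap F[X] (RatFunc F) p).intDegree = c.intDegree + p.natDegree := by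
  rw [intDegree_mul hc (algebraMap_ne_zero hp), intDegree_polynomial]

section Lattices

variable {F : Type*} [Field F] {ι : Type*}

theorem mem_valR {x : RatFunc F} : x ∈ valR F ↔ x.intDegree ≤ 0 := Iff.rfl

theorem exists_mul_mem_valR (q : RatFunc F) : ∃ b ≠ 0, b ∈ valR F ∧ b * q ∈ valR F := by
  by_cases hq : q ∈ valR F
  · exact ⟨1, one_ne_zero, one_mem _, by rwa [one_mul]⟩
  have hq0 : q ≠ 0 := fun h => hq (h ▸ zero_mem _)
  refine ⟨q⁻¹, inv_ne_zero hq0, ?_, by rw [inv_mul_cancel₀ hq0]; exact one_mem _⟩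
  rw [mem_valR] at hq ⊢
  rw [RatFunc.intDegree_inv]
  omega

/-- The fractional ideal `t^D R`. The bound `D` is a natural number because `intDegree 0 = 0`. -/
def intDegreeLE (F : Type*) [Field F] (D : ℕ) : Submodule (valR F) (RatFunc F) where
  carrier := {x | x.intDegree ≤ D}
  zero_mem' := by simp [RatFunc.intDegree_zero]
  add_mem' {a b} ha hb := by
    rcases eq_or_ne b 0 with rfl | hb0
    · simpa using ha
    rcases eq_or_ne (a + b) 0 with h | h
    · simp [h, RatFunc.intDegree_zero]
    · exact (RatFunc.intDegree_add_le hb0 h).trans (max_le ha hb)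
  smul_mem' r x hx := by
    change ((r : RatFunc F) * x).intDegree ≤ D
    rcases eq_or_ne (r : RatFunc F) 0 with hr | hr
    · simp [hr, RatFunc.intDegree_zero]
    rcases eq_or_ne x 0 with rfl | hx0
    · simp [RatFunc.intDegree_zero]
    have hr' : (r : RatFunc F).intDegree ≤ 0 := r.2
    have hx' : x.intDegree ≤ D := hx
    rw [RatFunc.intDegree_mul hr hx0]
    omega

theorem mem_intDegreeLE {D : ℕ} {x : RatFunc F} : x ∈ intDegreeLE F D ↔ x.intDegree ≤ D :=
  Iff.rfl

theorem mem_intDegreeLE_zero {x : RatFunc F} : x ∈ intDegreeLE F 0 ↔ x ∈ valR F := by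
  rw [mem_intDegreeLE, mem_valR, Nat.cast_zero]

theorem smul_mem_of_mem_valR (L : Submodule (valR F) (ι → RatFunc F)) {r : RatFunc F}
    (hr : r ∈ valR F) {x : ι → RatFunc F} (hx : x ∈ L) : r • x ∈ L :=
  L.smul_mem ⟨r, hr⟩ hx

theorem span_range_single_one_eq_pi [Fintype ι] [DecidableEq ι] :
    span (valR F) (range fun i : ι => Pi.single i (1 : RatFunc F)) =
      pi univ fun _ => intDegreeLE F 0 := by
  refine le_antisymm (span_le.2 ?_) fun x hx => ?_
  · rintro _ ⟨i, rfl⟩ j -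
    rcases eq_or_ne j i with rfl | h <;> simp [mem_intDegreeLE, *]
  · rw [← Finset.univ_sum_single x]
    refine sum_mem fun i _ => ?_
    have hxi : x i ∈ valR F := mem_intDegreeLE_zero.1 (hx i (mem_univ i))
    rw [← mul_one (x i), ← smul_eq_mul, Pi.single_smul]
    exact smul_mem_of_mem_valR _ hxi (subset_span (mem_range_self i))

theorem exists_le_pi_intDegreeLE_of_fg [Fintype ι] {L : Submodule (valR F) (ι → RatFunc F)}
    (hL : L.FG) : ∃ D : ℕ, L ≤ pi univ fun _ => intDegreeLE F D := by
  obtain ⟨T, rfl⟩ := hL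
  refine ⟨T.sup fun v => Finset.univ.sup fun i => (v i).intDegree.toNat,
    span_le.2 fun v hv i _ => ?_⟩
  calc (v i).intDegree ≤ (v i).intDegree.toNat := Int.self_le_toNat _
    _ ≤ _ := by
      exact_mod_cast (Finset.le_sup (f := fun i => (v i).intDegree.toNat)
        (Finset.mem_univ i)).trans (Finset.le_sup (f := fun v : ι → RatFunc F =>
          Finset.univ.sup fun i => (v i).intDegree.toNat) hv)

theorem exists_smul_mem_of_mem_span {L : Submodule (valR F) (ι → RatFunc F)}
    {v : ι → RatFunc F} (hv : v ∈ span (RatFunc F) (L : Set (ι → RatFunc F))) :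
    ∃ s ≠ 0, s ∈ valR F ∧ s • v ∈ L := by
  induction hv using span_induction with
  | mem y hy => exact ⟨1, one_ne_zero, one_mem _, by rwa [one_smul]⟩
  | zero => exact ⟨1, one_ne_zero, one_mem _, by rw [smul_zero]; exact zero_mem _⟩
  | add x y _ _ hx hy =>
    obtain ⟨sx, hsx, hsxR, hsxL⟩ := hx
    obtain ⟨sy, hsy, hsyR, hsyL⟩ := hy
    refine ⟨sx * sy, mul_ne_zero hsx hsy, mul_mem hsxR hsyR, ?_⟩
    have : (sx * sy) • (x + y) = sy • (sx • x) + sx • (sy • y) := by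
      rw [smul_add, smul_smul, smul_smul, mul_comm sy sx]
    rw [this]
    exact add_mem (smul_mem_of_mem_valR L hsyR hsxL) (smul_mem_of_mem_valR L hsxR hsyL)
  | smul q x _ hx =>
    obtain ⟨s, hs, hsR, hsL⟩ := hx
    obtain ⟨b, hb, hbR, hbqR⟩ := exists_mul_mem_valR q
    refine ⟨s * b, mul_ne_zero hs hb, mul_mem hsR hbR, ?_⟩
    have : (s * b) • (q • x) = (b * q) • (s • x) := by
      rw [smul_smul, smul_smul, mul_comm s b, mul_assoc, mul_assoc, mul_comm s q]
    rw [this]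
    exact smul_mem_of_mem_valR L hbqR hsL

theorem exists_single_mem_of_span_eq_top [Fintype ι] [DecidableEq ι]
    {L : Submodule (valR F) (ι → RatFunc F)}
    (hL : span (RatFunc F) (L : Set (ι → RatFunc F)) = ⊤) :
    ∃ s ≠ 0, ∀ j, Pi.single j s ∈ L := by
  have := fun j : ι => exists_smul_mem_of_mem_span (hL ▸ mem_top : Pi.single j 1 ∈ _)
  choose t ht htR htL using this
  refine ⟨∏ k, t k, Finset.prod_ne_zero_iff.2 fun k _ => ht k, fun j => ?_⟩
  have : Pi.single j (∏ k, t k) = (∏ k ∈ Finset.univ.erase j, t k) • t j • Pi.single j 1 := by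
    rw [smul_smul, Finset.prod_erase_mul _ _ (Finset.mem_univ j), ← Pi.single_smul, smul_eq_mul,
      mul_one]
  rw [this]
  exact smul_mem_of_mem_valR L (prod_mem fun k _ => htR k) (htL j)

theorem intDegree_add_le_of_mulVec_mem [Fintype ι] [DecidableEq ι]
    {L : Submodule (valR F) (ι → RatFunc F)} {D : ℕ} (hL : L ≤ pi univ fun _ => intDegreeLE F D)
    {s : RatFunc F} (hs : s ≠ 0) (hsL : ∀ j, Pi.single j s ∈ L) {A : Matrix ι ι (RatFunc F)}
    (hA : ∀ x ∈ L, A *ᵥ x ∈ L) {i j : ι} (hij : A i j ≠ 0) :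
    (A i j).intDegree + s.intDegree ≤ D := by
  have : (A *ᵥ Pi.single j s) i ∈ intDegreeLE F D := hL (hA _ (hsL j)) i (mem_univ i)
  rwa [mem_intDegreeLE, mulVec_single, Pi.smul_apply, col_apply, MulOpposite.smul_eq_mul_unop,
    MulOpposite.unop_op, RatFunc.intDegree_mul hij hs] at this

theorem mulVec_mem_pi_intDegreeLE_zero [Fintype ι] {A : Matrix ι ι (RatFunc F)}
    (hA : ∀ i j, A i j ∈ valR F) {x : ι → RatFunc F} (hx : x ∈ pi univ fun _ => intDegreeLE F 0) :
    A *ᵥ x ∈ pi univ fun _ => intDegreeLE F 0 := fun i _ =>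
  mem_intDegreeLE_zero.2 <| sum_mem fun j _ =>
    mul_mem (hA i j) (mem_intDegreeLE_zero.1 (hx j (mem_univ j)))

theorem map_mulVecLin_pi_intDegreeLE_zero [Fintype ι] [DecidableEq ι]
    {A B : Matrix ι ι (RatFunc F)} (hA : ∀ i j, A i j ∈ valR F) (hB : ∀ i j, B i j ∈ valR F)
    (hAB : A * B = 1) :
    (pi univ fun _ => intDegreeLE F 0).map (LinearMap.restrictScalars (valR F) A.mulVecLin) =
      pi univ fun _ => intDegreeLE F 0 := by
  refine le_antisymm (map_le_iff_le_comap.2 fun x hx => mulVec_mem_pi_intDegreeLE_zero hA hx)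
    fun x hx => mem_map.2 ⟨B *ᵥ x, mulVec_mem_pi_intDegreeLE_zero hB hx, ?_⟩
  simp [mulVec_mulVec, hAB]

end Lattices

section Stabilizers

variable {F : Type*} [Field F] {n : ℕ}

theorem exists_mulVec_mem_of_stabilizesClass {L : Submodule (valR F) (Fin n → RatFunc F)}
    {M : Matrix (Fin n) (Fin n) F[X]} (hM : IsUnit M.det) (h : stabilizesClass F n L M) :
    ∃ c : RatFunc F, c ≠ 0 ∧ (∀ x ∈ L, (c⁻¹ • M.map (algebraMap F[X] (RatFunc F))) *ᵥ x ∈ L) ∧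
      ∀ x ∈ L, (c • M⁻¹.map (algebraMap F[X] (RatFunc F))) *ᵥ x ∈ L := by
  obtain ⟨c, hc, hmap⟩ := h
  set φ := algebraMap F[X] (RatFunc F)
  have hinv : M⁻¹.map φ * M.map φ = 1 := by
    rw [← Matrix.map_mul, nonsing_inv_mul M hM, Matrix.map_one _ (map_zero φ) (map_one φ)]
  refine ⟨c, hc, fun x hx => ?_, fun x hx => ?_⟩
  · obtain ⟨y, hy, hyx⟩ := mem_map.1 (hmap.le (mem_map_of_mem hx))
    simp only [LinearMap.restrictScalars_apply, LinearMap.smul_apply, LinearMap.id_apply,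
      mulVecLin_apply] at hyx
    rwa [smul_mulVec, ← hyx, inv_smul_smul₀ hc]
  · obtain ⟨y, hy, hyx⟩ := mem_map.1 (hmap.ge (mem_map_of_mem hx))
    simp only [LinearMap.restrictScalars_apply, LinearMap.smul_apply, LinearMap.id_apply,
      mulVecLin_apply] at hyx
    rwa [smul_mulVec, ← mulVec_smul, ← hyx, mulVec_mulVec, hinv, one_mulVec]

theorem natDegree_le_of_stabilizesClass {L : Submodule (valR F) (Fin n → RatFunc F)} {D : ℕ}
    (hL : L ≤ pi univ fun _ => intDegreeLE F D) {s : RatFunc F} (hs : s ≠ 0)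
    (hsL : ∀ j, Pi.single j s ∈ L) {M : Matrix (Fin n) (Fin n) F[X]} (hM : IsUnit M.det)
    (h : stabilizesClass F n L M) (i j : Fin n) :
    ((M i j).natDegree : ℤ) ≤ 2 * (D - s.intDegree) := by
  have hsD : s.intDegree ≤ D := by
    have : (Pi.single i s : Fin n → RatFunc F) i ∈ intDegreeLE F D := hL (hsL i) i (mem_univ i)
    rwa [Pi.single_eq_same] at this
  rcases eq_or_ne (M i j) 0 with hij | hij
  · rw [hij, Polynomial.natDegree_zero]
    omega
  obtain ⟨c, hc, hA, hB⟩ := exists_mulVec_mem_of_stabilizesClass hM h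
  obtain ⟨k, hki⟩ := exists_ne_zero_of_mul_eq_one (mul_nonsing_inv M hM) i
  have hMij := intDegree_add_le_of_mulVec_mem hL hs hsL hA (i := i) (j := j)
  have hNki := intDegree_add_le_of_mulVec_mem hL hs hsL hB (i := k) (j := i)
  simp only [Matrix.smul_apply, Matrix.map_apply, smul_eq_mul] at hMij hNki
  rw [RatFunc.intDegree_mul_algebraMap (inv_ne_zero hc) hij, RatFunc.intDegree_inv] at hMij
  rw [RatFunc.intDegree_mul_algebraMap hc hki] at hNki
  have := hMij (mul_ne_zero (inv_ne_zero hc) (RatFunc.algebraMap_ne_zero hij))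
  have := hNki (mul_ne_zero hc (RatFunc.algebraMap_ne_zero hki))
  omega

theorem finite_setOf_stabilizesClass [Finite F] {L : Submodule (valR F) (Fin n → RatFunc F)}
    (hfg : L.FG) (hspan : span (RatFunc F) (L : Set (Fin n → RatFunc F)) = ⊤) :
    {M : Matrix (Fin n) (Fin n) F[X] | IsUnit M.det ∧ stabilizesClass F n L M}.Finite := by
  obtain ⟨D, hD⟩ := exists_le_pi_intDegreeLE_of_fg hfg
  obtain ⟨s, hs, hsL⟩ := exists_single_mem_of_span_eq_top hspan
  refine (Matrix.finite_setOf_natDegree_le (2 * (D - s.intDegree)).toNat).subset ?_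
  rintro M ⟨hM, h⟩ i j
  have := natDegree_le_of_stabilizesClass hD hs hsL hM h i j
  omega

theorem exists_eq_C_of_stabilizesClass {M : Matrix (Fin n) (Fin n) F[X]} (hM : IsUnit M.det)
    (h : stabilizesClass F n (pi univ fun _ => intDegreeLE F 0) M) (i j : Fin n) :
    ∃ a : F, M i j = Polynomial.C a := by
  have hsL (k : Fin n) : Pi.single k (1 : RatFunc F) ∈ pi univ fun _ => intDegreeLE F 0 := by
    rw [← span_range_single_one_eq_pi]
    exact subset_span (mem_range_self k)
  have := natDegree_le_of_stabilizesClass le_rfl (s := (1 : RatFunc F)) one_ne_zero hsL hM h i j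
  rw [RatFunc.intDegree_one] at this
  obtain ⟨a, ha⟩ := Polynomial.natDegree_eq_zero.1 (by omega : (M i j).natDegree = 0)
  exact ⟨a, ha.symm⟩

theorem stabilizesClass_of_forall_eq_C {M : Matrix (Fin n) (Fin n) F[X]} (hM : IsUnit M.det)
    (hC : ∀ i j, ∃ a : F, M i j = Polynomial.C a) :
    stabilizesClass F n (pi univ fun _ => intDegreeLE F 0) M := by
  choose a ha using hC
  have hM₀ : M = (of a).map Polynomial.C := Matrix.ext ha
  have hdet : IsUnit (of a).det := by
    rwa [hM₀, ← RingHom.mapMatrix_apply, ← RingHom.map_det, Polynomial.isUnit_C] at hM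
  have hconst (N : Matrix (Fin n) (Fin n) F) (i j : Fin n) : N.map RatFunc.C i j ∈ valR F := by
    simp [mem_valR, RatFunc.intDegree_C]
  have hmap : M.map (algebraMap F[X] (RatFunc F)) = (of a).map RatFunc.C := by
    ext i j
    simp [ha, RatFunc.algebraMap_C]
  refine ⟨1, one_ne_zero, ?_⟩
  rw [one_smul, hmap, map_mulVecLin_pi_intDegreeLE_zero (hconst _) (hconst (of a)⁻¹)]
  · rw [LinearMap.restrictScalars_id, Submodule.map_id]
  · rw [← Matrix.map_mul, mul_nonsing_inv _ hdet, Matrix.map_one _ (map_zero _) (map_one _)]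

end Stabilizers

/-- the stabilizer in `GL_n(F[t])` of the homothety class of the standard
lattice `[Rⁿ]` of the affine building of `F(t)` (for the valuation at infinity) is
exactly `GL_n(F)` (matrices with constant entries); in particular it is finite, and —
properness of the action — the stabilizer of every vertex of the building is finite. -/
theorem stabilizer_standard_lattice (F : Type*) [Field F] [Finite F] (n : ℕ)
    (L₀ : Submodule (valR F) (Fin n → RatFunc F))
    (hL₀ : L₀ = Submodule.span (valR F)
      (Set.range fun i => Pi.single i (1 : RatFunc F))) :
    ({M : Matrix (Fin n) (Fin n) (Polynomial F) |
        IsUnit M.det ∧ stabilizesClass F n L₀ M} =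
      {M : Matrix (Fin n) (Fin n) (Polynomial F) |
        IsUnit M.det ∧ ∀ i j, ∃ a : F, M i j = Polynomial.C a}) ∧
    {M : Matrix (Fin n) (Fin n) (Polynomial F) |
      IsUnit M.det ∧ stabilizesClass F n L₀ M}.Finite ∧
    (∀ L : Submodule (valR F) (Fin n → RatFunc F), L.FG →
      Submodule.span (RatFunc F) (L : Set (Fin n → RatFunc F)) = ⊤ →
      {M : Matrix (Fin n) (Fin n) (Polynomial F) |
        IsUnit M.det ∧ stabilizesClass F n L M}.Finite) := by
  have hfg : L₀.FG := hL₀ ▸ fg_span (finite_range _)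
  have hspan : span (RatFunc F) (L₀ : Set (Fin n → RatFunc F)) = ⊤ := by
    rw [hL₀, span_span_of_tower (valR F)]
    convert (Pi.basisFun (RatFunc F) (Fin n)).span_eq
    exact (Pi.basisFun_apply _ _ _).symm
  rw [hL₀, span_range_single_one_eq_pi] at hfg hspan ⊢
  refine ⟨Set.ext fun M => ⟨fun ⟨hM, h⟩ => ⟨hM, exists_eq_C_of_stabilizesClass hM h⟩,
    fun ⟨hM, hC⟩ => ⟨hM, stabilizesClass_of_forall_eq_C hM hC⟩⟩,
    finite_setOf_stabilizesClass hfg hspan, fun _ => finite_setOf_stabilizesClass⟩
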